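/- arXiv:2007.01843 — 3 statements merged into one kernel-verified Lean document; each statement's English description precedes it below -/
import Mathlib

section
/- The function f(x) = ln((2-x)/x) + (2/(2+x))·((x/2)·ln(x/2) + 1 - x/2), defined for x in (0,2), is strictly decreasing on (0,2). -/
noncomputable def f (x : ℝ) : ℝ :=
  Real.log ((2 - x) / x) + (2 / (2 + x)) * ((x / 2) * Real.log (x / 2) + 1 - x / 2)

open Real Set InformationTheory

/-!
Write `f x = log (2 - x) - log x + 2 / (2 + x) * klFun (x / 2)` with `klFun t = t log t + 1 - t`.
The logarithmic part is strictly decreasing, and the second term is the product of two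
nonnegative decreasing functions: `klFun` is decreasing on `[0, 1]` since its derivative is `log`.
-/

theorem AntitoneOn.mul {α M₀ : Type*} [Mul M₀] [Zero M₀] [Preorder M₀] [Preorder α]
    [PosMulMono M₀] [MulPosMono M₀] {f g : α → M₀} {s : Set α} (hf : AntitoneOn f s)
    (hg : AntitoneOn g s) (hf₀ : ∀ x ∈ s, 0 ≤ f x) (hg₀ : ∀ x ∈ s, 0 ≤ g x) :
    AntitoneOn (f * g) s :=
  fun _ ha _ hb h ↦ mul_le_mul (hf ha hb h) (hg ha hb h) (hg₀ _ hb) (hf₀ _ ha)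

theorem strictAntiOn_klFun : StrictAntiOn klFun (Icc 0 1) := by
  refine strictAntiOn_of_deriv_neg (convex_Icc 0 1) continuous_klFun.continuousOn fun x hx ↦ ?_
  rw [interior_Icc] at hx
  rw [deriv_klFun]
  exact log_neg hx.1 hx.2

theorem f_eq_log_sub_log_add_klFun {x : ℝ} (hx : x ∈ Ioo 0 2) :
    f x = log (2 - x) - log x + 2 / (2 + x) * klFun (x / 2) := by
  rw [f, klFun_apply, log_div (by linarith [hx.2]) hx.1.ne']

theorem f_strictAntiOn : StrictAntiOn f (Set.Ioo (0 : ℝ) 2) := by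
  have hlog : StrictAntiOn (fun x ↦ log (2 - x) - log x) (Ioo 0 2) :=
    fun x hx y hy hxy ↦ sub_lt_sub (log_lt_log (by linarith [hy.2]) (by linarith))
      (log_lt_log hx.1 hxy)
  have hweight : AntitoneOn (fun x : ℝ ↦ 2 / (2 + x)) (Ioo 0 2) :=
    fun x hx y _ hxy ↦ div_le_div_of_nonneg_left zero_le_two (by linarith [hx.1]) (by linarith)
  have hkl : AntitoneOn (fun x ↦ klFun (x / 2)) (Ioo 0 2) :=
    AntitoneOn.comp_MonotoneOn strictAntiOn_klFun.antitoneOn (fun x _ y _ hxy ↦ by linarith)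
      fun x hx ↦ ⟨by linarith [hx.1], by linarith [hx.2]⟩
  have hprod := hweight.mul hkl (fun x hx ↦ div_nonneg zero_le_two (by linarith [hx.1]))
    fun x hx ↦ klFun_nonneg (by linarith [hx.1])
  exact (hlog.add_antitone hprod).congr fun x hx ↦ (f_eq_log_sub_log_add_klFun hx).symm
end

section
/- Let χ̂ > 0 and P : ℝ → [1/(2+χ̂), 1] be continuous. Define 𝒰(t) = [ (1+χ̂)·∫_{-∞}^t exp(-∫_l^t (1 + χ̂·P(s)) ds) dl ]^{-1}. Then 2/(2+χ̂) ≤ 𝒰(t) ≤ 1 for all t ∈ ℝ. -/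
/-!
Write `g = 1 + χ̂ P`, so that `a := 2(1 + χ̂)/(2 + χ̂) ≤ g ≤ 1 + χ̂ =: b`. For `l ≤ t` the inner
integral `∫_l^t g` then lies between `a (t - l)` and `b (t - l)`, so the kernel
`exp (-∫_l^t g)` is squeezed between `exp (b (l - t))` and `exp (a (l - t))`, whose integrals over
`(-∞, t]` are `1/b` and `1/a`. Multiplying by `1 + χ̂ = b` and inverting gives the bounds.
-/

open MeasureTheory Set Real

lemma integrableOn_Iic_exp_mul_sub {a : ℝ} (ha : 0 < a) (t : ℝ) :
    IntegrableOn (fun l => exp (a * (l - t))) (Iic t) := by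
  simp only [mul_sub, exp_sub]
  exact (integrableOn_exp_mul_Iic ha t).div_const _

lemma integral_Iic_exp_mul_sub {a : ℝ} (ha : 0 < a) (t : ℝ) :
    ∫ l in Iic t, exp (a * (l - t)) = a⁻¹ := by
  simp only [mul_sub, exp_sub]
  rw [integral_div, integral_exp_mul_Iic ha]
  field_simp

section KernelBounds

variable {g : ℝ → ℝ} {a b t l : ℝ}

lemma mul_sub_le_integral_Ioc (hg : LocallyIntegrable g) (hga : ∀ s, a ≤ g s) (hl : l ≤ t) :
    a * (t - l) ≤ ∫ s in Ioc l t, g s :=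
  calc a * (t - l) = ∫ _ in Ioc l t, a := by simp [volume_real_Ioc_of_le hl, mul_comm]
    _ ≤ ∫ s in Ioc l t, g s :=
      setIntegral_mono_on (integrableOn_const measure_Ioc_lt_top.ne)
        ((hg.integrableOn_isCompact isCompact_Icc).mono_set Ioc_subset_Icc_self)
        measurableSet_Ioc fun s _ => hga s

lemma integral_Ioc_le_mul_sub (hg : LocallyIntegrable g) (hgb : ∀ s, g s ≤ b) (hl : l ≤ t) :
    ∫ s in Ioc l t, g s ≤ b * (t - l) := by
  have := mul_sub_le_integral_Ioc hg.neg (fun s => neg_le_neg (hgb s)) hl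
  rw [Pi.neg_def, integral_neg] at this
  linarith

lemma continuousOn_integral_Ioc (hg : LocallyIntegrable g) (t : ℝ) :
    ContinuousOn (fun l => ∫ s in Ioc l t, g s) (Iic t) := by
  have hgi (x y : ℝ) : IntervalIntegrable g volume x y :=
    intervalIntegrable_iff.2 <| (hg.integrableOn_isCompact isCompact_uIcc).mono_set uIoc_subset_uIcc
  refine (intervalIntegral.continuous_primitive hgi t).neg
    |>.continuousOn.congr fun l (hl : l ≤ t) => ?_
  rw [Pi.neg_apply, intervalIntegral.integral_symm, neg_neg, intervalIntegral.integral_of_le hl]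

lemma exp_neg_integral_Ioc_le (hg : LocallyIntegrable g) (hga : ∀ s, a ≤ g s) (hl : l ≤ t) :
    exp (-∫ s in Ioc l t, g s) ≤ exp (a * (l - t)) := by
  have := mul_sub_le_integral_Ioc hg hga hl
  exact exp_le_exp.2 (by linarith)

lemma exp_mul_sub_le_exp_neg_integral_Ioc (hg : LocallyIntegrable g) (hgb : ∀ s, g s ≤ b)
    (hl : l ≤ t) : exp (b * (l - t)) ≤ exp (-∫ s in Ioc l t, g s) := by
  have := integral_Ioc_le_mul_sub hg hgb hl
  exact exp_le_exp.2 (by linarith)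

lemma integrableOn_Iic_exp_neg_integral_Ioc (hg : LocallyIntegrable g) (ha : 0 < a)
    (hga : ∀ s, a ≤ g s) (t : ℝ) :
    IntegrableOn (fun l => exp (-∫ s in Ioc l t, g s)) (Iic t) := by
  refine (integrableOn_Iic_exp_mul_sub ha t).mono'
    ((continuousOn_integral_Ioc hg t).neg.rexp.aestronglyMeasurable measurableSet_Iic) ?_
  refine (ae_restrict_iff' measurableSet_Iic).2 (.of_forall fun l (hl : l ≤ t) => ?_)
  rw [norm_of_nonneg (exp_pos _).le]
  exact exp_neg_integral_Ioc_le hg hga hl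

lemma integral_Iic_exp_neg_integral_Ioc_mem_Icc (hg : LocallyIntegrable g) (ha : 0 < a)
    (hga : ∀ s, a ≤ g s) (hgb : ∀ s, g s ≤ b) (t : ℝ) :
    ∫ l in Iic t, exp (-∫ s in Ioc l t, g s) ∈ Icc b⁻¹ a⁻¹ := by
  have hb : 0 < b := ha.trans_le ((hga 0).trans (hgb 0))
  have hint := integrableOn_Iic_exp_neg_integral_Ioc hg ha hga t
  constructor
  · rw [← integral_Iic_exp_mul_sub hb t]
    exact setIntegral_mono_on (integrableOn_Iic_exp_mul_sub hb t) hint measurableSet_Iic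
      fun l hl => exp_mul_sub_le_exp_neg_integral_Ioc hg hgb hl
  · rw [← integral_Iic_exp_mul_sub ha t]
    exact setIntegral_mono_on hint (integrableOn_Iic_exp_mul_sub ha t) measurableSet_Iic
      fun l hl => exp_neg_integral_Ioc_le hg hga hl

end KernelBounds

theorem Ucal_bounds (χ : ℝ) (hχ : 0 < χ) (P : ℝ → ℝ) (hP : Continuous P)
    (hlb : ∀ s, 1 / (2 + χ) ≤ P s) (hub : ∀ s, P s ≤ 1) :
    ∀ t : ℝ,
      2 / (2 + χ) ≤
        ((1 + χ) * ∫ l in Set.Iic t, Real.exp (-∫ s in Set.Ioc l t, (1 + χ * P s)))⁻¹ ∧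
      ((1 + χ) * ∫ l in Set.Iic t, Real.exp (-∫ s in Set.Ioc l t, (1 + χ * P s)))⁻¹ ≤ 1 := by
  intro t
  have hg : LocallyIntegrable fun s => 1 + χ * P s :=
    (continuous_const.add (continuous_const.mul hP)).locallyIntegrable
  have h1χ : 0 < 1 + χ := by linarith
  have ha : 0 < 2 * (1 + χ) / (2 + χ) := by positivity
  have hga (s : ℝ) : 2 * (1 + χ) / (2 + χ) ≤ 1 + χ * P s := by
    have := mul_le_mul_of_nonneg_left (hlb s) hχ.le
    calc 2 * (1 + χ) / (2 + χ) = 1 + χ * (1 / (2 + χ)) := by field_simp; ring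
      _ ≤ 1 + χ * P s := by linarith
  have hgb (s : ℝ) : 1 + χ * P s ≤ 1 + χ := by nlinarith [hub s]
  obtain ⟨hlo, hhi⟩ := integral_Iic_exp_neg_integral_Ioc_mem_Icc hg ha hga hgb t
  set I := ∫ l in Iic t, exp (-∫ s in Ioc l t, (1 + χ * P s))
  have hone : 1 ≤ (1 + χ) * I := by
    simpa [h1χ.ne'] using mul_le_mul_of_nonneg_left hlo h1χ.le
  refine ⟨?_, inv_le_one_of_one_le₀ hone⟩
  calc 2 / (2 + χ) = ((1 + χ) * (2 * (1 + χ) / (2 + χ))⁻¹)⁻¹ := by field_simp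
    _ ≤ ((1 + χ) * I)⁻¹ :=
      inv_anti₀ (one_pos.trans_le hone) (mul_le_mul_of_nonneg_left hhi h1χ.le)
end

section
/- Let χ̂ > 0 and let Q : ℝ → [1/(2+χ̂), 1] be continuous and strictly increasing. Define 𝒰(t) = [ (1+χ̂)·∫_{-∞}^t exp(-∫_l^t (1 + χ̂·Q(s)) ds) dl ]^{-1}. Then 𝒰 is differentiable with 𝒰'(t) = 𝒰(t)·(1 + χ̂·Q(t) - (1+χ̂)·𝒰(t)), and 𝒰 is strictly increasing. -/
open MeasureTheory Set Real Filter

theorem Ucal_ode_strictMono (χ : ℝ) (hχ : 0 < χ) (Q : ℝ → ℝ) (hQc : Continuous Q)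
    (hQmono : StrictMono Q)
    (hlb : ∀ s, 1 / (2 + χ) ≤ Q s) (hub : ∀ s, Q s ≤ 1) :
    (∀ t : ℝ, HasDerivAt
        (fun t => ((1 + χ) * ∫ l in Set.Iic t, Real.exp (-∫ s in Set.Ioc l t, (1 + χ * Q s)))⁻¹)
        (((1 + χ) * ∫ l in Set.Iic t, Real.exp (-∫ s in Set.Ioc l t, (1 + χ * Q s)))⁻¹ *
          (1 + χ * Q t -
            (1 + χ) * ((1 + χ) * ∫ l in Set.Iic t, Real.exp (-∫ s in Set.Ioc l t, (1 + χ * Q s)))⁻¹)) t) ∧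
    StrictMono
      (fun t => ((1 + χ) * ∫ l in Set.Iic t, Real.exp (-∫ s in Set.Ioc l t, (1 + χ * Q s)))⁻¹) := by
  have hQpos : ∀ s, 0 < Q s := fun s => lt_of_lt_of_le (by positivity) (hlb s)
  have hc1 : ∀ s, (1:ℝ) ≤ 1 + χ * Q s := fun s => by nlinarith [hQpos s]
  have hcont : Continuous fun s => 1 + χ * Q s := by continuity
  set F : ℝ → ℝ := fun t => ∫ s in (0:ℝ)..t, (1 + χ * Q s) with hF
  have hFd : ∀ t, HasDerivAt F (1 + χ * Q t) t := fun t =>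
    intervalIntegral.integral_hasDerivAt_right (hcont.intervalIntegrable _ _)
      (hcont.stronglyMeasurableAtFilter _ _) hcont.continuousAt
  have hFcont : Continuous F :=
    continuous_iff_continuousAt.2 fun t => (hFd t).continuousAt
  have hIoc : ∀ l t : ℝ, l ≤ t → (∫ s in Ioc l t, (1 + χ * Q s)) = F t - F l := by
    intro l t h
    rw [← intervalIntegral.integral_of_le h, hF]
    rw [intervalIntegral.integral_interval_sub_left (hcont.intervalIntegrable 0 t)
      (hcont.intervalIntegrable 0 l)]
  have hconst : ∀ l t : ℝ, l ≤ t → ∀ c : ℝ, (∫ _s in Ioc l t, c) = c * (t - l) := by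
    intro l t h c
    rw [setIntegral_const, Real.volume_real_Ioc_of_le h, smul_eq_mul]
    ring
  have hFgap : ∀ l t : ℝ, l ≤ t → t - l ≤ F t - F l := by
    intro l t h
    rw [← hIoc l t h]
    calc t - l = ∫ _s in Ioc l t, (1:ℝ) := by rw [hconst l t h 1]; ring
    _ ≤ ∫ s in Ioc l t, (1 + χ * Q s) :=
        setIntegral_mono_on (integrable_const 1)
          (hcont.integrableOn_Ioc) measurableSet_Ioc (fun x _ => hc1 x)
  have hgInt : ∀ t, IntegrableOn (fun l => exp (F l)) (Iic t) := by
    intro t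
    refine Integrable.mono' (((integrableOn_exp_Iic t).const_mul (exp (F t - t))))
      (hFcont.rexp.aestronglyMeasurable) ?_
    rw [ae_restrict_iff' measurableSet_Iic]
    refine ae_of_all _ fun l hl => ?_
    rw [Real.norm_of_nonneg (exp_pos _).le, ← Real.exp_add, Real.exp_le_exp]
    have := hFgap l t hl
    linarith
  set g : ℝ → ℝ := fun t => ∫ l in Iic t, exp (F l) with hg
  have hsplit : ∀ a b : ℝ, a ≤ b → g b = g a + ∫ l in Ioc a b, exp (F l) := by
    intro a b h
    rw [hg]
    simp only
    rw [← Set.Iic_union_Ioc_eq_Iic h,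
      setIntegral_union (Set.Iic_disjoint_Ioc le_rfl) measurableSet_Ioc (hgInt a)
        ((hgInt b).mono_set (Set.Ioc_subset_Iic_self.trans (Set.Iic_subset_Iic.2 le_rfl)))]
  have hginterval : ∀ a b : ℝ, g b - g a = ∫ l in a..b, exp (F l) := by
    intro a b
    rcases le_total a b with h | h
    · rw [intervalIntegral.integral_of_le h, hsplit a b h]; ring
    · rw [intervalIntegral.integral_of_ge h, hsplit b a h]; ring
  have hgd : ∀ t, HasDerivAt g (exp (F t)) t := by
    intro t
    have h1 : HasDerivAt (fun u => g t + ∫ l in t..u, exp (F l)) (exp (F t)) t :=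
      (intervalIntegral.integral_hasDerivAt_right (hFcont.rexp.intervalIntegrable _ _)
        (hFcont.rexp.stronglyMeasurableAtFilter _ _) hFcont.rexp.continuousAt).const_add _
    have heq : g = fun u => g t + ∫ l in t..u, exp (F l) := by
      funext u; rw [← hginterval t u]; ring
    rw [heq]
    exact h1
  have hgpos : ∀ t, 0 < g t := by
    intro t
    have h1 : (0:ℝ) ≤ g (t - 1) :=
      setIntegral_nonneg measurableSet_Iic fun l _ => (exp_pos _).le
    have h2 : 0 < ∫ l in (t-1)..t, exp (F l) :=
      intervalIntegral.intervalIntegral_pos_of_pos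
        (hFcont.rexp.intervalIntegrable _ _) (fun x => exp_pos _) (by linarith)
    rw [intervalIntegral.integral_of_le (by linarith)] at h2
    rw [hsplit (t-1) t (by linarith)]
    linarith
  have hfg : ∀ t, (∫ l in Iic t, exp (-∫ s in Ioc l t, (1 + χ * Q s)))
      = exp (-(F t)) * g t := by
    intro t
    rw [hg]
    simp only
    rw [← integral_const_mul]
    apply setIntegral_congr_fun measurableSet_Iic
    intro l hl
    dsimp only
    rw [hIoc l t hl, ← Real.exp_add]
    ring_nf
  set f : ℝ → ℝ := fun t => exp (-(F t)) * g t with hfdef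
  have hfpos : ∀ t, 0 < f t := fun t => mul_pos (exp_pos _) (hgpos t)
  have hfd : ∀ t, HasDerivAt f (1 - (1 + χ * Q t) * f t) t := by
    intro t
    have h1 : HasDerivAt (fun u => exp (-(F u))) (exp (-(F t)) * -(1 + χ * Q t)) t :=
      (hFd t).neg.exp
    have h2 := h1.mul (hgd t)
    refine h2.congr_deriv ?_
    rw [hfdef]
    simp only
    rw [← Real.exp_add, neg_add_cancel, Real.exp_zero]
    ring
  -- key strict inequality
  have hkey : ∀ t, 1 < (1 + χ * Q t) * f t := by
    intro t
    set c : ℝ := 1 + χ * Q t with hcdef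
    have hcpos : 0 < c := lt_of_lt_of_le one_pos (hc1 t)
    have hc1t : (1:ℝ) ≤ c := hc1 t
    -- integrability of the exponential comparison function
    have hEint : IntegrableOn (fun l => exp (c * (l - t))) (Iic t) := by
      have hcE : Continuous fun l : ℝ => exp (c * (l - t)) :=
        Real.continuous_exp.comp (continuous_const.mul (continuous_id.sub continuous_const))
      refine Integrable.mono' ((integrableOn_exp_Iic t).const_mul (exp (-t)))
        hcE.aestronglyMeasurable ?_
      rw [ae_restrict_iff' measurableSet_Iic]
      refine ae_of_all _ fun l hl => ?_
      rw [Real.norm_of_nonneg (exp_pos _).le, ← Real.exp_add, Real.exp_le_exp]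
      nlinarith [hl.out]
    -- value of the comparison integral
    have hEval : (∫ l in Iic t, exp (c * (l - t))) = 1 / c := by
      have hderiv : ∀ x ∈ Iio t, HasDerivAt (fun l => exp (c * (l - t)) / c)
          (exp (c * (x - t))) x := by
        intro x _
        have h1 : HasDerivAt (fun l : ℝ => c * (l - t)) c x := by
          simpa using ((hasDerivAt_id x).sub_const t).const_mul c
        have := h1.exp.div_const c
        refine this.congr_deriv ?_
        field_simp
      have htend : Tendsto (fun l => exp (c * (l - t)) / c) atBot (nhds 0) := by
        have h1 : Tendsto (fun l : ℝ => c * (l - t)) atBot atBot := by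
          apply Tendsto.const_mul_atBot hcpos
          simpa [sub_eq_add_neg] using tendsto_atBot_add_const_right atBot (-t) tendsto_id
        simpa using (Real.tendsto_exp_atBot.comp h1).div_const c
      have hcE2 : Continuous fun l : ℝ => exp (c * (l - t)) / c :=
        (Real.continuous_exp.comp (continuous_const.mul
          (continuous_id.sub continuous_const))).div_const c
      have := integral_Iic_of_hasDerivAt_of_tendsto
        hcE2.continuousWithinAt hderiv hEint htend
      rw [this]
      simp
    -- pointwise comparisons
    set ψ : ℝ → ℝ := fun l => exp (-(F t)) * exp (F l) with hψ
    have hψint : IntegrableOn ψ (Iic t) := (hgInt t).const_mul _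
    have hIoclt : ∀ l, l < t → (∫ s in Ioc l t, (1 + χ * Q s)) < c * (t - l) := by
      intro l hl
      have hpos : 0 < ∫ s in l..t, (χ * (Q t - Q s)) := by
        apply intervalIntegral.intervalIntegral_pos_of_pos_on
          ((continuous_const.mul (continuous_const.sub hQc)).intervalIntegrable _ _)
          ?_ hl
        intro x hx
        have := hQmono hx.2
        show 0 < χ * (Q t - Q x)
        nlinarith
      rw [intervalIntegral.integral_of_le hl.le] at hpos
      have hsub : (∫ s in Ioc l t, (χ * (Q t - Q s)))
          = c * (t - l) - ∫ s in Ioc l t, (1 + χ * Q s) := by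
        rw [← hconst l t hl.le c, ← integral_sub (integrableOn_const (C := c) (by
          rw [Real.volume_Ioc]; exact ENNReal.ofReal_ne_top)) hcont.integrableOn_Ioc]
        apply setIntegral_congr_fun measurableSet_Ioc
        intro s _
        rw [hcdef]; ring
      linarith [hsub ▸ hpos]
    have hle : ∀ l ∈ Iic t, exp (c * (l - t)) ≤ ψ l := by
      intro l hl
      rw [hψ]
      simp only
      rw [← Real.exp_add, Real.exp_le_exp]
      have h1 := hFgap l t hl
      rcases eq_or_lt_of_le (Set.mem_Iic.mp hl) with rfl | hlt
      · simp
      · have h2 := hIoclt l hlt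
        rw [hIoc l t hlt.le] at h2
        nlinarith
    have hlt : ∀ l, l < t → exp (c * (l - t)) < ψ l := by
      intro l hlt
      rw [hψ]
      simp only
      rw [← Real.exp_add, Real.exp_lt_exp]
      have h2 := hIoclt l hlt
      rw [hIoc l t hlt.le] at h2
      nlinarith
    have hsubpos : 0 < ∫ l in Iic t, (ψ l - exp (c * (l - t))) := by
      rw [setIntegral_pos_iff_support_of_nonneg_ae]
      · refine lt_of_lt_of_le ?_ (measure_mono (?_ : Iio t ⊆ _))
        · simp [Real.volume_Iio]
        · intro l hl
          refine ⟨?_, le_of_lt (Set.mem_Iio.mp hl)⟩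
          simp only [Function.mem_support]
          exact ne_of_gt (sub_pos.2 (hlt l (Set.mem_Iio.mp hl)))
      · filter_upwards [ae_restrict_mem measurableSet_Iic] with l hl
        exact sub_nonneg.2 (hle l hl)
      · exact hψint.sub hEint
    have hψval : (∫ l in Iic t, ψ l) = f t := by
      rw [hψ, integral_const_mul, hfdef]
    rw [integral_sub hψint hEint, hEval, hψval] at hsubpos
    have : 1 / c < f t := by linarith
    calc (1:ℝ) = c * (1 / c) := by field_simp
    _ < c * f t := by
        exact (mul_lt_mul_iff_right₀ hcpos).2 this
  -- derivative of U
  have hUd : ∀ t, HasDerivAt (fun u => ((1 + χ) * f u)⁻¹)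
      (((1 + χ) * f t)⁻¹ * (1 + χ * Q t - (1 + χ) * ((1 + χ) * f t)⁻¹)) t := by
    intro t
    have hne : (1 + χ) * f t ≠ 0 := ne_of_gt (mul_pos (by linarith) (hfpos t))
    have := ((hfd t).const_mul (1 + χ)).inv hne
    refine this.congr_deriv ?_
    have hf0 : f t ≠ 0 := ne_of_gt (hfpos t)
    have h1χ : (1 + χ) ≠ 0 := by positivity
    field_simp
    ring
  have hUeq : (fun t : ℝ => ((1 + χ) * ∫ l in Set.Iic t,
      Real.exp (-∫ s in Set.Ioc l t, (1 + χ * Q s)))⁻¹) = fun u => ((1 + χ) * f u)⁻¹ := by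
    funext u; rw [hfg u]
  constructor
  · intro t
    rw [hUeq, hfg t]
    exact hUd t
  · rw [hUeq]
    apply strictMono_of_deriv_pos
    intro x
    rw [(hUd x).deriv]
    have hUpos : 0 < ((1 + χ) * f x)⁻¹ :=
      inv_pos.2 (mul_pos (by linarith) (hfpos x))
    have h2 : 0 < 1 + χ * Q x - (1 + χ) * ((1 + χ) * f x)⁻¹ := by
      have hf0 : f x ≠ 0 := ne_of_gt (hfpos x)
      have h1χ : (1 + χ) ≠ 0 := by positivity
      have : (1 + χ) * ((1 + χ) * f x)⁻¹ = (f x)⁻¹ := by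
        rw [mul_inv]
        field_simp
      rw [this]
      have : (f x)⁻¹ < 1 + χ * Q x := by
        rw [inv_lt_iff_one_lt_mul₀ (hfpos x)]
        · exact hkey x
      linarith
    exact mul_pos hUpos h2
end
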